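/- For the bivariate Student t distribution with ν degrees of freedom and correlation parameter ρ ∈ (-1,1), Kendall's tau equals (2/π) arcsin(ρ). -/

import Mathlib

open MeasureTheory ProbabilityTheory Real Set

/-- Kendall's tau of a pair of random variables, computed via an independent copy on
the product space: `τ = E[sign((T₁ - T₁')(T₂ - T₂'))]`. -/
noncomputable def kendallTau {Ω : Type*} [MeasureSpace Ω] (T₁ T₂ : Ω → ℝ) : ℝ :=
  ∫ q : Ω × Ω, Real.sign ((T₁ q.1 - T₁ q.2) * (T₂ q.1 - T₂ q.2))
    ∂((ℙ : Measure Ω).prod (ℙ : Measure Ω))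

/-- Inverse gamma density with shape `ν/2` and scale `ν/2`, vanishing off `(0, ∞)`. -/
noncomputable def invGammaHalfNuDensity (ν x : ℝ) : ℝ :=
  if 0 < x then
    ((ν / 2) ^ (ν / 2) / Real.Gamma (ν / 2)) * x ^ (-(ν / 2) - 1)
      * Real.exp (-(ν / 2) / x)
  else 0

/-!
Conditionally on `H = h` and on the variance `H' = h'` of the independent copy, the pair of
differences `(T₁ - T₁', T₂ - T₂')` is `(√h Z₁ - √h' Z₁', √h Z₂ - √h' Z₂')`, a centred Gaussian pair
with correlation `ρ` whose two coordinates both have variance `h + h'`. The sign of a product is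
invariant under positive scaling, so the conditional Kendall's tau is Sheppard's
`E[sign (X Y)] = (2/π) arcsin ρ` for a standard Gaussian pair with correlation `ρ`, whatever
`h, h' > 0` are. For Sheppard's formula write `Y = cos α X + sin α X'` with `α = arccos ρ`: in
polar coordinates the sign only depends on the angle `θ`, where it is `sign (cos θ cos (θ - α))`,
whose mean over the circle is `1 - 2α/π`.
-/

open scoped NNReal

namespace Real

@[fun_prop]
lemma measurable_sign : Measurable Real.sign :=
  Measurable.ite (measurableSet_lt measurable_id measurable_const) measurable_const
    (Measurable.ite (measurableSet_lt measurable_const measurable_id) measurable_const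
      measurable_const)

lemma norm_sign_le_one (x : ℝ) : ‖Real.sign x‖ ≤ 1 := by
  rcases Real.sign_apply_eq x with h | h | h <;> simp [h]

lemma sign_mul_of_pos {c : ℝ} (hc : 0 < c) (x : ℝ) : Real.sign (c * x) = Real.sign x := by
  rcases lt_trichotomy x 0 with h | rfl | h
  · rw [sign_of_neg h, sign_of_neg (mul_neg_of_pos_of_neg hc h)]
  · simp
  · rw [sign_of_pos h, sign_of_pos (mul_pos hc h)]

end Real

lemma integrable_sign_comp {α : Type*} [MeasurableSpace α] {μ : Measure α} [IsFiniteMeasure μ]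
    {f : α → ℝ} (hf : Measurable f) : Integrable (fun x => Real.sign (f x)) μ :=
  .of_bound (measurable_sign.comp hf).aestronglyMeasurable 1
    (.of_forall fun _ => norm_sign_le_one _)

lemma intervalIntegrable_sign_comp {f : ℝ → ℝ} (hf : Measurable f) (a b : ℝ) :
    IntervalIntegrable (fun x => Real.sign (f x)) volume a b :=
  intervalIntegrable_const.mono_fun' (measurable_sign.comp hf).aestronglyMeasurable
    (.of_forall fun x => norm_sign_le_one (f x))

lemma measurePreserving_prodProdProdComm {α β γ δ : Type*} [MeasurableSpace α]
    [MeasurableSpace β] [MeasurableSpace γ] [MeasurableSpace δ] (μ : Measure α) (ν : Measure β)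
    (κ : Measure γ) (τ : Measure δ) [SFinite μ] [SFinite ν] [SFinite κ] [SFinite τ] :
    MeasurePreserving (fun z : (α × β) × (γ × δ) => ((z.1.1, z.2.1), (z.1.2, z.2.2)))
      ((μ.prod ν).prod (κ.prod τ)) ((μ.prod κ).prod (ν.prod τ)) := by
  have middle : MeasurePreserving (fun x : β × γ × δ => (x.2.1, x.1, x.2.2))
      (ν.prod (κ.prod τ)) (κ.prod (ν.prod τ)) :=
    (measurePreserving_prodAssoc κ ν τ).comp <|
      (Measure.measurePreserving_swap.prod (.id τ)).comp
        ((measurePreserving_prodAssoc ν κ τ).symm _)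
  exact ((measurePreserving_prodAssoc μ κ (ν.prod τ)).symm _).comp <|
    ((MeasurePreserving.id μ).prod middle).comp (measurePreserving_prodAssoc μ ν (κ.prod τ))

lemma intervalIntegral_eq_sub_mul_of_eqOn_Ioo {f : ℝ → ℝ} {a b c : ℝ} (hab : a ≤ b)
    (h : EqOn f (fun _ => c) (Ioo a b)) : ∫ x in a..b, f x = (b - a) * c := by
  rw [intervalIntegral.integral_of_le hab, integral_Ioc_eq_integral_Ioo,
    setIntegral_congr_fun measurableSet_Ioo h]
  simp [hab]

lemma integral_sign_cos_sub_cos {β : ℝ} (hβ₀ : 0 ≤ β) (hβπ : β ≤ π) :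
    ∫ u in -π..π, Real.sign (cos u - cos β) = 4 * β - 2 * π := by
  have hint := intervalIntegrable_sign_comp (f := fun u => cos u - cos β) (by fun_prop)
  have left : ∫ u in -π..-β, Real.sign (cos u - cos β) = (-β - -π) * -1 := by
    refine intervalIntegral_eq_sub_mul_of_eqOn_Ioo (by linarith) fun u hu => ?_
    rw [← cos_neg u]
    exact sign_of_neg (sub_neg.2 (cos_lt_cos_of_nonneg_of_le_pi hβ₀ (by linarith [hu.1])
      (by linarith [hu.2])))
  have middle : ∫ u in -β..β, Real.sign (cos u - cos β) = (β - -β) * 1 := by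
    refine intervalIntegral_eq_sub_mul_of_eqOn_Ioo (by linarith) fun u hu => ?_
    rw [← cos_abs u]
    exact sign_of_pos (sub_pos.2 (cos_lt_cos_of_nonneg_of_le_pi (abs_nonneg u) hβπ
      (abs_lt.2 hu)))
  have right : ∫ u in β..π, Real.sign (cos u - cos β) = (π - β) * -1 :=
    intervalIntegral_eq_sub_mul_of_eqOn_Ioo hβπ fun u hu =>
      sign_of_neg (sub_neg.2 (cos_lt_cos_of_nonneg_of_le_pi hβ₀ hu.2.le hu.1))
  rw [← intervalIntegral.integral_add_adjacent_intervals (hint (-π) (-β)) (hint _ π),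
    ← intervalIntegral.integral_add_adjacent_intervals (hint (-β) β) (hint _ π), left, middle,
    right]
  ring

lemma integral_sign_cos_mul_cos_sub {α : ℝ} (hα₀ : 0 ≤ α) (hαπ : α ≤ π) :
    ∫ θ in -π..π, Real.sign (cos θ * cos (θ - α)) = 2 * π - 4 * α := by
  set g : ℝ → ℝ := fun u => Real.sign (cos u - cos (π - α))
  have hg : Function.Periodic g (2 * π) := fun u => by simp [g, cos_add_two_pi]
  have hint := intervalIntegrable_sign_comp (f := fun u => cos u - cos (π - α)) (by fun_prop)
  have hprod (θ : ℝ) : Real.sign (cos θ * cos (θ - α)) = g (2 * θ - α) := by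
    have : cos θ * cos (θ - α) = 2⁻¹ * (cos (2 * θ - α) - cos (π - α)) := by
      rw [cos_pi_sub, show 2 * θ - α = θ + (θ - α) by ring, cos_add, cos_sub, sin_sub]
      linear_combination (cos α / 2) * sin_sq_add_cos_sq θ
    rw [this, Real.sign_mul_of_pos (by norm_num)]
  have two_periods := hg.intervalIntegral_add_zsmul_eq 2 (2 * -π - α) hint
  rw [show 2 * -π - α + (2 : ℤ) • (2 * π) = 2 * π - α by ring,
    hg.intervalIntegral_add_eq _ (-π), show -π + 2 * π = π by ring] at two_periods
  simp_rw [hprod]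
  rw [intervalIntegral.integral_comp_mul_sub g two_ne_zero, two_periods,
    integral_sign_cos_sub_cos (by linarith) (by linarith)]
  simp only [zsmul_eq_mul, smul_eq_mul]
  ring

lemma integral_Ioi_mul_exp_neg_sq_div_two : ∫ r in Ioi 0, r * exp (-r ^ 2 / 2) = 1 := by
  have h : ∫ r in Ioi 0, ((r * exp (-r ^ 2 / 2) : ℝ) : ℂ) = 1 := by
    convert integral_mul_cexp_neg_mul_sq (b := 2⁻¹) (by norm_num) using 1
    · refine setIntegral_congr_fun measurableSet_Ioi fun r _ => ?_
      push_cast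
      ring_nf
    · norm_num
  rw [integral_complex_ofReal] at h
  exact_mod_cast h

lemma integral_gaussianReal_prod_eq (f : ℝ × ℝ → ℝ) :
    ∫ p, f p ∂(gaussianReal 0 1).prod (gaussianReal 0 1) =
      ∫ p, gaussianPDFReal 0 1 p.1 * gaussianPDFReal 0 1 p.2 * f p := by
  have hpdf := measurable_gaussianPDF (0 : ℝ) 1
  rw [gaussianReal_of_var_ne_zero 0 one_ne_zero, prod_withDensity hpdf hpdf,
    ← Measure.volume_eq_prod, integral_withDensity_eq_integral_toReal_smul
      (by fun_prop)
      (.of_forall fun p => ENNReal.mul_lt_top (by simp [gaussianPDF]) (by simp [gaussianPDF]))]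
  simp [gaussianPDF, ENNReal.toReal_ofReal (gaussianPDFReal_nonneg _ _ _)]

lemma gaussianPDFReal_mul_gaussianPDFReal_polar (r θ : ℝ) :
    gaussianPDFReal 0 1 (r * cos θ) * gaussianPDFReal 0 1 (r * sin θ) =
      (2 * π)⁻¹ * exp (-r ^ 2 / 2) := by
  simp only [gaussianPDFReal, NNReal.coe_one, mul_one, sub_zero]
  rw [mul_mul_mul_comm, ← mul_inv, mul_self_sqrt (by positivity), ← exp_add]
  congr 2
  linear_combination (-(r ^ 2) / 2) * sin_sq_add_cos_sq θ

theorem integral_sign_mul_cos_mul_add_sin_mul_gaussianReal {α : ℝ} (hα₀ : 0 ≤ α)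
    (hαπ : α ≤ π) :
    ∫ p, Real.sign (p.1 * (cos α * p.1 + sin α * p.2))
      ∂(gaussianReal 0 1).prod (gaussianReal 0 1) = 1 - 2 * α / π := by
  have hpolar : EqOn
      (fun q : ℝ × ℝ => q.1 • (gaussianPDFReal 0 1 (polarCoord.symm q).1 *
        gaussianPDFReal 0 1 (polarCoord.symm q).2 * Real.sign ((polarCoord.symm q).1 *
          (cos α * (polarCoord.symm q).1 + sin α * (polarCoord.symm q).2))))
      (fun q => (2 * π)⁻¹ * (q.1 * exp (-q.1 ^ 2 / 2)) * Real.sign (cos q.2 * cos (q.2 - α)))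
      polarCoord.target := by
    rintro ⟨r, θ⟩ ⟨hr : 0 < r, -⟩
    simp only [polarCoord_symm_apply, smul_eq_mul]
    rw [gaussianPDFReal_mul_gaussianPDFReal_polar,
      show r * cos θ * (cos α * (r * cos θ) + sin α * (r * sin θ)) =
        r ^ 2 * (cos θ * cos (θ - α)) by rw [cos_sub]; ring,
      Real.sign_mul_of_pos (by positivity)]
    ring
  rw [integral_gaussianReal_prod_eq, ← integral_comp_polarCoord_symm,
    setIntegral_congr_fun polarCoord.open_target.measurableSet hpolar, polarCoord_target,
    Measure.volume_eq_prod,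
    setIntegral_prod_mul (fun r => (2 * π)⁻¹ * (r * exp (-r ^ 2 / 2)))
      (fun θ => Real.sign (cos θ * cos (θ - α))), integral_const_mul,
    integral_Ioi_mul_exp_neg_sq_div_two, ← integral_Ioc_eq_integral_Ioo,
    ← intervalIntegral.integral_of_le (by linarith [pi_pos]),
    integral_sign_cos_mul_cos_sub hα₀ hαπ]
  field_simp
  ring

theorem integral_sign_mul_correlated_gaussianReal {ρ : ℝ} (hρ : |ρ| ≤ 1) :
    ∫ p, Real.sign (p.1 * (ρ * p.1 + √(1 - ρ ^ 2) * p.2))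
      ∂(gaussianReal 0 1).prod (gaussianReal 0 1) = 2 / π * arcsin ρ := by
  obtain ⟨h₁, h₂⟩ := abs_le.1 hρ
  have h := integral_sign_mul_cos_mul_add_sin_mul_gaussianReal (arccos_nonneg ρ) (arccos_le_pi ρ)
  rw [cos_arccos h₁ h₂, sin_arccos] at h
  rw [h, arcsin_eq_pi_div_two_sub_arccos]
  field_simp

lemma map_mul_sub_mul_gaussianReal_prod (a c : ℝ) :
    ((gaussianReal 0 1).prod (gaussianReal 0 1)).map (fun p => a * p.1 - c * p.2) =
      gaussianReal 0 (.mk (a ^ 2) (sq_nonneg a) + .mk (c ^ 2) (sq_nonneg c)) := by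
  have h : (fun p : ℝ × ℝ => a * p.1 - c * p.2) =
      (fun q => q.1 + q.2) ∘ Prod.map (a * ·) (-c * ·) := by
    funext p
    simp only [Function.comp_apply, Prod.map_fst, Prod.map_snd]
    ring
  rw [h, ← Measure.map_map (by fun_prop) (by fun_prop),
    ← Measure.map_prod_map _ _ (by fun_prop) (by fun_prop), gaussianReal_map_const_mul,
    gaussianReal_map_const_mul, ← Measure.conv, gaussianReal_conv_gaussianReal]
  simp

lemma map_mul_sub_mul_gaussianReal_prod_prod (a c : ℝ) :
    (((gaussianReal 0 1).prod (gaussianReal 0 1)).prod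
        ((gaussianReal 0 1).prod (gaussianReal 0 1))).map
      (fun z => (a * z.1.1 - c * z.2.1, a * z.1.2 - c * z.2.2)) =
      (gaussianReal 0 (.mk (a ^ 2) (sq_nonneg a) + .mk (c ^ 2) (sq_nonneg c))).prod
        (gaussianReal 0 (.mk (a ^ 2) (sq_nonneg a) + .mk (c ^ 2) (sq_nonneg c))) := by
  have h : (fun z : (ℝ × ℝ) × (ℝ × ℝ) => (a * z.1.1 - c * z.2.1, a * z.1.2 - c * z.2.2)) =
      Prod.map (fun p => a * p.1 - c * p.2) (fun p => a * p.1 - c * p.2) ∘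
        fun z => ((z.1.1, z.2.1), (z.1.2, z.2.2)) := rfl
  rw [h, ← Measure.map_map (by fun_prop) (by fun_prop),
    (measurePreserving_prodProdProdComm _ _ _ _).map_eq,
    ← Measure.map_prod_map _ _ (by fun_prop) (by fun_prop), map_mul_sub_mul_gaussianReal_prod]

lemma integral_sign_mul_correlated_gaussianReal_of_var {ρ : ℝ} (hρ : |ρ| ≤ 1) {v : ℝ≥0}
    (hv : v ≠ 0) :
    ∫ p, Real.sign (p.1 * (ρ * p.1 + √(1 - ρ ^ 2) * p.2))
      ∂(gaussianReal 0 v).prod (gaussianReal 0 v) = 2 / π * arcsin ρ := by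
  have hv₀ : 0 < (v : ℝ) := by positivity
  have hscale : (gaussianReal 0 1).map (√v * ·) = gaussianReal 0 v := by
    rw [gaussianReal_map_const_mul]
    congr 1
    · simp
    · ext; simp [sq_sqrt hv₀.le]
  rw [← hscale, Measure.map_prod_map _ _ (by fun_prop) (by fun_prop),
    integral_map (by fun_prop) (Measurable.aestronglyMeasurable (by fun_prop)),
    ← integral_sign_mul_correlated_gaussianReal hρ]
  congr with p
  rw [Prod.map_fst, Prod.map_snd,
    show √v * p.1 * (ρ * (√v * p.1) + √(1 - ρ ^ 2) * (√v * p.2)) =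
      v * (p.1 * (ρ * p.1 + √(1 - ρ ^ 2) * p.2)) by
        linear_combination (p.1 * (ρ * p.1 + √(1 - ρ ^ 2) * p.2)) * sq_sqrt hv₀.le,
    Real.sign_mul_of_pos hv₀]

theorem integral_sign_mul_sub_correlated_gaussianReal {ρ : ℝ} (hρ : |ρ| ≤ 1) {a : ℝ}
    (ha : a ≠ 0) (c : ℝ) :
    ∫ z, Real.sign ((a * z.1.1 - c * z.2.1) *
        (a * (ρ * z.1.1 + √(1 - ρ ^ 2) * z.1.2) - c * (ρ * z.2.1 + √(1 - ρ ^ 2) * z.2.2)))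
      ∂((gaussianReal 0 1).prod (gaussianReal 0 1)).prod
        ((gaussianReal 0 1).prod (gaussianReal 0 1)) = 2 / π * arcsin ρ := by
  have hvar : NNReal.mk (a ^ 2) (sq_nonneg a) + .mk (c ^ 2) (sq_nonneg c) ≠ 0 := by
    rw [← NNReal.coe_ne_zero]
    simp only [NNReal.coe_add, NNReal.coe_mk]
    positivity
  rw [← integral_sign_mul_correlated_gaussianReal_of_var hρ hvar,
    ← map_mul_sub_mul_gaussianReal_prod_prod,
    integral_map (by fun_prop) (Measurable.aestronglyMeasurable (by fun_prop))]
  congr with z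
  congr 1
  ring

theorem kendallTau_sqrt_mul_correlated_gaussian {Ω : Type*} [MeasureSpace Ω]
    [IsProbabilityMeasure (ℙ : Measure Ω)] {B₁ B₂ H : Ω → ℝ} (hB₁ : Measurable B₁)
    (hB₂ : Measurable B₂) (hH : Measurable H) (hB₁law : Measure.map B₁ ℙ = gaussianReal 0 1)
    (hB₂law : Measure.map B₂ ℙ = gaussianReal 0 1) (hBindep : IndepFun B₁ B₂ ℙ)
    (hHB : IndepFun H (fun ω => (B₁ ω, B₂ ω)) ℙ) (hHpos : ∀ᵐ ω, 0 < H ω) {ρ : ℝ}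
    (hρ : |ρ| ≤ 1) :
    kendallTau (fun ω => √(H ω) * B₁ ω) (fun ω => √(H ω) * (ρ * B₁ ω + √(1 - ρ ^ 2) * B₂ ω)) =
      2 / π * arcsin ρ := by
  set γ := gaussianReal 0 1
  set μH : Measure ℝ := Measure.map H ℙ
  have : IsProbabilityMeasure μH := Measure.isProbabilityMeasure_map hH.aemeasurable
  set φ : Ω → ℝ × ℝ × ℝ := fun ω => (H ω, B₁ ω, B₂ ω)
  set σ : (ℝ × ℝ × ℝ) × (ℝ × ℝ × ℝ) → (ℝ × ℝ) × ((ℝ × ℝ) × (ℝ × ℝ)) :=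
    fun z => ((z.1.1, z.2.1), (z.1.2, z.2.2))
  set G : (ℝ × ℝ) × ((ℝ × ℝ) × (ℝ × ℝ)) → ℝ := fun w =>
    Real.sign ((√w.1.1 * w.2.1.1 - √w.1.2 * w.2.2.1) *
      (√w.1.1 * (ρ * w.2.1.1 + √(1 - ρ ^ 2) * w.2.1.2) -
        √w.1.2 * (ρ * w.2.2.1 + √(1 - ρ ^ 2) * w.2.2.2)))
  have hφ : Measurable φ := by fun_prop
  have hlaw : Measure.map φ ℙ = μH.prod (γ.prod γ) := by
    rw [(indepFun_iff_map_prod_eq_prod_map_map hH.aemeasurable (by fun_prop)).1 hHB,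
      (indepFun_iff_map_prod_eq_prod_map_map hB₁.aemeasurable hB₂.aemeasurable).1 hBindep,
      hB₁law, hB₂law]
  have hpair_law : Measure.map (σ ∘ Prod.map φ φ) ((ℙ : Measure Ω).prod ℙ) =
      (μH.prod μH).prod ((γ.prod γ).prod (γ.prod γ)) := by
    rw [← Measure.map_map (by fun_prop) (by fun_prop), ← Measure.map_prod_map _ _ hφ hφ, hlaw,
      (measurePreserving_prodProdProdComm _ _ _ _).map_eq]
  have hμHpos : ∀ᵐ h ∂μH, 0 < h := (ae_map_iff hH.aemeasurable measurableSet_Ioi).2 hHpos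
  have hinner : ∀ᵐ w ∂μH.prod μH,
      ∫ y, G (w, y) ∂(γ.prod γ).prod (γ.prod γ) = 2 / π * arcsin ρ := by
    filter_upwards [Measure.quasiMeasurePreserving_fst.ae hμHpos] with w hw
    exact integral_sign_mul_sub_correlated_gaussianReal hρ (sqrt_pos.2 hw).ne' (√w.2)
  calc kendallTau _ _ = ∫ w, G w ∂(μH.prod μH).prod ((γ.prod γ).prod (γ.prod γ)) := by
        rw [← hpair_law,
          integral_map (by fun_prop) (Measurable.aestronglyMeasurable (by fun_prop))]
        rfl
    _ = ∫ w, ∫ y, G (w, y) ∂(γ.prod γ).prod (γ.prod γ) ∂μH.prod μH :=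
        integral_prod _ (integrable_sign_comp (by fun_prop))
    _ = ∫ _w, 2 / π * arcsin ρ ∂μH.prod μH := integral_congr_ae hinner
    _ = 2 / π * arcsin ρ := by simp

lemma ae_pos_withDensity_invGammaHalfNuDensity (ν : ℝ) :
    ∀ᵐ x ∂volume.withDensity (fun x => ENNReal.ofReal (invGammaHalfNuDensity ν x)), 0 < x := by
  rw [ae_iff, show {x : ℝ | ¬0 < x} = Iic 0 by ext; simp, withDensity_apply _ measurableSet_Iic]
  exact (setLIntegral_congr_fun measurableSet_Iic fun x (hx : x ≤ 0) => by
    simp [invGammaHalfNuDensity, not_lt.2 hx]).trans lintegral_zero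

theorem kendall_tau_student_t_general
    {Ω : Type*} [MeasureSpace Ω] [IsProbabilityMeasure (ℙ : Measure Ω)]
    (ν : ℝ)
    (B₁ B₂ H : Ω → ℝ)
    (hB₁ : Measurable B₁) (hB₂ : Measurable B₂) (hH : Measurable H)
    (hB₁law : Measure.map B₁ ℙ = gaussianReal 0 1)
    (hB₂law : Measure.map B₂ ℙ = gaussianReal 0 1)
    (hBindep : IndepFun B₁ B₂ ℙ)
    (hHB : IndepFun H (fun ω => (B₁ ω, B₂ ω)) ℙ)
    (hHlaw : Measure.map H ℙ
      = volume.withDensity (fun x => ENNReal.ofReal (invGammaHalfNuDensity ν x)))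
    (ρ : ℝ) (hρ : |ρ| < 1)
    (Z₁ Z₂ T₁ T₂ : Ω → ℝ)
    (hZ₁ : ∀ ω, Z₁ ω = B₁ ω)
    (hZ₂ : ∀ ω, Z₂ ω = ρ * B₁ ω + Real.sqrt (1 - ρ ^ 2) * B₂ ω)
    (hT₁ : ∀ ω, T₁ ω = Real.sqrt (H ω) * Z₁ ω)
    (hT₂ : ∀ ω, T₂ ω = Real.sqrt (H ω) * Z₂ ω) :
    kendallTau T₁ T₂ = (2 / Real.pi) * Real.arcsin ρ := by
  have hHpos : ∀ᵐ ω, 0 < H ω :=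
    ae_of_ae_map hH.aemeasurable (hHlaw ▸ ae_pos_withDensity_invGammaHalfNuDensity ν)
  obtain rfl : T₁ = fun ω => √(H ω) * B₁ ω := funext fun ω => by rw [hT₁, hZ₁]
  obtain rfl : T₂ = fun ω => √(H ω) * (ρ * B₁ ω + √(1 - ρ ^ 2) * B₂ ω) :=
    funext fun ω => by rw [hT₂, hZ₂]
  exact kendallTau_sqrt_mul_correlated_gaussian hB₁ hB₂ hH hB₁law hB₂law hBindep hHB hHpos hρ.le

/-- For the bivariate Student t distribution with `ν` degrees of freedom
and correlation parameter `ρ ∈ (-1,1)`, realized as `(T₁, T₂) = (√H·Z₁, √H·Z₂)` with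
`(Z₁, Z₂)` bivariate standard Gaussian with correlation `ρ` and `H` an independent
inverse gamma variable with shape `ν/2` and scale `ν/2`, Kendall's tau equals
`(2/π)·arcsin ρ`. -/
theorem kendall_tau_student_t
    {Ω : Type*} [MeasureSpace Ω] [IsProbabilityMeasure (ℙ : Measure Ω)]
    (ν : ℝ) (hν : 0 < ν)
    (B₁ B₂ H : Ω → ℝ)
    (hB₁ : Measurable B₁) (hB₂ : Measurable B₂) (hH : Measurable H)
    (hB₁law : Measure.map B₁ ℙ = gaussianReal 0 1)
    (hB₂law : Measure.map B₂ ℙ = gaussianReal 0 1)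
    (hBindep : IndepFun B₁ B₂ ℙ)
    (hHB : IndepFun H (fun ω => (B₁ ω, B₂ ω)) ℙ)
    (hHlaw : Measure.map H ℙ
      = volume.withDensity (fun x => ENNReal.ofReal (invGammaHalfNuDensity ν x)))
    (ρ : ℝ) (hρ : |ρ| < 1)
    (Z₁ Z₂ T₁ T₂ : Ω → ℝ)
    (hZ₁ : ∀ ω, Z₁ ω = B₁ ω)
    (hZ₂ : ∀ ω, Z₂ ω = ρ * B₁ ω + Real.sqrt (1 - ρ ^ 2) * B₂ ω)
    (hT₁ : ∀ ω, T₁ ω = Real.sqrt (H ω) * Z₁ ω)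
    (hT₂ : ∀ ω, T₂ ω = Real.sqrt (H ω) * Z₂ ω) :
    kendallTau T₁ T₂ = (2 / Real.pi) * Real.arcsin ρ :=
  kendall_tau_student_t_general ν B₁ B₂ H hB₁ hB₂ hH hB₁law hB₂law hBindep hHB hHlaw ρ hρ Z₁ Z₂ T₁
    T₂ hZ₁ hZ₂ hT₁ hT₂
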